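/- The function g(z) = f(z) + 2 log z, where f(z) = (1/√(1-z²)) log((1+√(1-z²))/(1-√(1-z²))), is strictly monotonically increasing on (0,1), with lim_{z→0⁺} g(z) = 2 log 2 and lim_{z→1⁻} g(z) = 2. -/

import Mathlib

open Real Filter Set Topology

/-- `f(z) = (1/√(1−z²)) log((1+√(1−z²))/(1−√(1−z²)))`. -/
noncomputable def fPaper (z : ℝ) : ℝ :=
  (1 / Real.sqrt (1 - z ^ 2)) *
    Real.log ((1 + Real.sqrt (1 - z ^ 2)) / (1 - Real.sqrt (1 - z ^ 2)))

/-- `g(z) = f(z) + 2 log z`. -/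
noncomputable def gPaper (z : ℝ) : ℝ := fPaper z + 2 * Real.log z

noncomputable def hAux (s : ℝ) : ℝ :=
  Real.log (1 - s ^ 2) + (1 / s) * (Real.log (1 + s) - Real.log (1 - s))

lemma L_gt {s : ℝ} (hs : s ∈ Set.Ioo (0:ℝ) 1) :
    2 * s < Real.log (1 + s) - Real.log (1 - s) := by
  obtain ⟨h0, h1⟩ := hs
  set ψ : ℝ → ℝ := fun x => Real.log (1 + x) - Real.log (1 - x) - 2 * x with hψ
  have key : StrictMonoOn ψ (Set.Ico (0:ℝ) 1) := by
    apply strictMonoOn_of_deriv_pos (convex_Ico 0 1)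
    · apply ContinuousOn.sub (ContinuousOn.sub ?_ ?_) (by fun_prop)
      · apply ContinuousOn.log (by fun_prop)
        intro x hx; nlinarith [hx.1, hx.2]
      · apply ContinuousOn.log (by fun_prop)
        intro x hx; nlinarith [hx.1, hx.2]
    · intro x hx
      rw [interior_Ico] at hx
      obtain ⟨hx0, hx1⟩ := hx
      have h1x : (1:ℝ) + x ≠ 0 := by linarith
      have h2x : (1:ℝ) - x ≠ 0 := by linarith
      have hd : HasDerivAt ψ (1/(1+x) - (-1)/(1-x) - 2) x := by
        have d1 : HasDerivAt (fun y : ℝ => Real.log (1 + y)) (1/(1+x)) x := by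
          simpa using (((hasDerivAt_id x).const_add 1).log h1x)
        have d2 : HasDerivAt (fun y : ℝ => Real.log (1 - y)) ((-1)/(1-x)) x := by
          simpa using (((hasDerivAt_id x).const_sub 1).log h2x)
        have h := (d1.sub d2).sub ((hasDerivAt_id x).const_mul 2)
        rw [mul_one] at h
        exact h
      rw [hd.deriv]
      rw [div_sub_div _ _ h1x h2x]
      have : (1:ℝ) * (1 - x) - (1 + x) * (-1) = 2 := by ring
      rw [this]
      rw [sub_pos, lt_div_iff₀ (by nlinarith)]
      nlinarith
  have := key (by constructor <;> linarith : (0:ℝ) ∈ Set.Ico (0:ℝ) 1)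
    (⟨le_of_lt h0, h1⟩ : s ∈ Set.Ico (0:ℝ) 1) h0
  simp [hψ] at this
  linarith

lemma hAux_hasDerivAt {s : ℝ} (hs : s ∈ Set.Ioo (0:ℝ) 1) :
    HasDerivAt hAux (2 / s - (Real.log (1 + s) - Real.log (1 - s)) / s ^ 2) s := by
  obtain ⟨h0, h1⟩ := hs
  have h1s : (1:ℝ) + s ≠ 0 := by linarith
  have h2s : (1:ℝ) - s ≠ 0 := by linarith
  have hsq : (1:ℝ) - s ^ 2 ≠ 0 := by nlinarith
  have hs0 : s ≠ 0 := ne_of_gt h0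
  have d1 : HasDerivAt (fun y : ℝ => Real.log (1 - y ^ 2)) ((-(2*s))/(1 - s^2)) s := by
    have : HasDerivAt (fun y : ℝ => 1 - y ^ 2) (-(2*s)) s := by
      simpa using ((hasDerivAt_pow 2 s).const_sub 1)
    simpa using this.log hsq
  have d2 : HasDerivAt (fun y : ℝ => 1 / y) (-(1/s^2)) s := by
    simpa using (hasDerivAt_inv hs0)
  have d3 : HasDerivAt (fun y : ℝ => Real.log (1 + y) - Real.log (1 - y))
      (1/(1+s) - (-1)/(1-s)) s := by
    have e1 : HasDerivAt (fun y : ℝ => Real.log (1 + y)) (1/(1+s)) s := by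
      simpa using (((hasDerivAt_id s).const_add 1).log h1s)
    have e2 : HasDerivAt (fun y : ℝ => Real.log (1 - y)) ((-1)/(1-s)) s := by
      simpa using (((hasDerivAt_id s).const_sub 1).log h2s)
    exact e1.sub e2
  have := d1.add (d2.mul d3)
  refine this.congr_deriv ?_
  field_simp
  ring

lemma hAux_strictAnti : StrictAntiOn hAux (Set.Ioo (0:ℝ) 1) := by
  apply strictAntiOn_of_deriv_neg (convex_Ioo 0 1)
  · intro x hx
    exact (hAux_hasDerivAt hx).continuousAt.continuousWithinAt
  · intro x hx
    rw [interior_Ioo] at hx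
    rw [(hAux_hasDerivAt hx).deriv]
    obtain ⟨hx0, hx1⟩ := hx
    have hL := L_gt ⟨hx0, hx1⟩
    rw [sub_neg, div_lt_div_iff₀ (by positivity) (by positivity)]
    nlinarith

lemma sqrt_mem {z : ℝ} (hz : z ∈ Set.Ioo (0:ℝ) 1) :
    Real.sqrt (1 - z ^ 2) ∈ Set.Ioo (0:ℝ) 1 := by
  obtain ⟨h0, h1⟩ := hz
  have hpos : (0:ℝ) < 1 - z ^ 2 := by nlinarith
  exact ⟨Real.sqrt_pos.mpr hpos, (Real.sqrt_lt' one_pos).mpr (by nlinarith)⟩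

lemma g_eq {z : ℝ} (hz : z ∈ Set.Ioo (0:ℝ) 1) :
    gPaper z = hAux (Real.sqrt (1 - z ^ 2)) := by
  obtain ⟨hs0, hs1⟩ := sqrt_mem hz
  set s := Real.sqrt (1 - z ^ 2) with hs
  have hsq : s ^ 2 = 1 - z ^ 2 := Real.sq_sqrt (by nlinarith [hz.1, hz.2])
  have h1s : (0:ℝ) < 1 + s := by linarith
  have h2s : (0:ℝ) < 1 - s := by linarith
  have hz2 : (1:ℝ) - s ^ 2 = z ^ 2 := by linarith
  unfold gPaper fPaper hAux
  rw [Real.log_div (ne_of_gt h1s) (ne_of_gt h2s), hz2, Real.log_pow, ← hs]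
  push_cast
  ring

lemma g_eq0 {z : ℝ} (hz : z ∈ Set.Ioo (0:ℝ) 1) :
    gPaper z = 2 / Real.sqrt (1 - z ^ 2) * Real.log (1 + Real.sqrt (1 - z ^ 2))
      - 2 * z ^ 2 * Real.log z /
        (Real.sqrt (1 - z ^ 2) * (Real.sqrt (1 - z ^ 2) + 1)) := by
  rw [g_eq hz]
  obtain ⟨hs0, hs1⟩ := sqrt_mem hz
  set s := Real.sqrt (1 - z ^ 2) with hs
  have hsq : s ^ 2 = 1 - z ^ 2 := Real.sq_sqrt (by nlinarith [hz.1, hz.2])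
  have h1s : (0:ℝ) < 1 + s := by linarith
  have h2s : (0:ℝ) < 1 - s := by linarith
  have hz0 : (0:ℝ) < z := hz.1
  have hz2 : (1:ℝ) - s ^ 2 = z ^ 2 := by linarith
  have hlog : Real.log (1 - s) = 2 * Real.log z - Real.log (1 + s) := by
    have h1 : (1:ℝ) - s = z ^ 2 / (1 + s) := by
      rw [eq_div_iff (ne_of_gt h1s)]; nlinarith
    rw [h1, Real.log_div (by positivity) (ne_of_gt h1s), Real.log_pow]
    push_cast; ring
  unfold hAux
  rw [hlog, hz2, Real.log_pow]
  push_cast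
  have hs0' : s ≠ 0 := ne_of_gt hs0
  have hs1' : s + 1 ≠ 0 := by linarith
  field_simp
  linear_combination (-2 * Real.log z) * hz2

theorem gPaper_strictMono_and_limits :
    StrictMonoOn gPaper (Set.Ioo (0 : ℝ) 1) ∧
    Filter.Tendsto gPaper (nhdsWithin 0 (Set.Ioo (0 : ℝ) 1)) (nhds (2 * Real.log 2)) ∧
    Filter.Tendsto gPaper (nhdsWithin 1 (Set.Ioo (0 : ℝ) 1)) (nhds 2) := by
  refine ⟨?_, ?_, ?_⟩
  · intro x hx y hy hxy
    rw [g_eq hx, g_eq hy]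
    apply hAux_strictAnti (sqrt_mem hy) (sqrt_mem hx)
    exact Real.sqrt_lt_sqrt (by nlinarith [hy.1, hy.2]) (by nlinarith [hx.1])
  · -- limit at 0
    have hφ : Tendsto (fun z : ℝ => Real.sqrt (1 - z ^ 2))
        (𝓝[Set.Ioo (0:ℝ) 1] 0) (𝓝 1) := by
      have hc : Continuous fun z : ℝ => Real.sqrt (1 - z ^ 2) := by fun_prop
      have := (hc.tendsto 0).mono_left
        (nhdsWithin_le_nhds : 𝓝[Set.Ioo (0:ℝ) 1] (0:ℝ) ≤ 𝓝 0)
      simpa using this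
    have term1 : Tendsto (fun z : ℝ => 2 / Real.sqrt (1 - z ^ 2) *
        Real.log (1 + Real.sqrt (1 - z ^ 2))) (𝓝[Set.Ioo (0:ℝ) 1] 0) (𝓝 (2 * Real.log 2)) := by
      have h1 : Tendsto (fun z : ℝ => 2 / Real.sqrt (1 - z ^ 2))
          (𝓝[Set.Ioo (0:ℝ) 1] 0) (𝓝 2) := by
        have := (tendsto_const_nhds (x := (2:ℝ))).div hφ one_ne_zero
        simpa [Pi.div_def] using this
      have h2 : Tendsto (fun z : ℝ => Real.log (1 + Real.sqrt (1 - z ^ 2)))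
          (𝓝[Set.Ioo (0:ℝ) 1] 0) (𝓝 (Real.log 2)) := by
        have hlog : ContinuousAt Real.log 2 := Real.continuousAt_log (by norm_num)
        have : Tendsto (fun z : ℝ => 1 + Real.sqrt (1 - z ^ 2))
            (𝓝[Set.Ioo (0:ℝ) 1] 0) (𝓝 2) := by
          have := (tendsto_const_nhds (x := (1:ℝ))).add hφ
          simpa [one_add_one_eq_two] using this
        exact hlog.tendsto.comp this
      exact h1.mul h2
    have term2 : Tendsto (fun z : ℝ => 2 * z ^ 2 * Real.log z /
        (Real.sqrt (1 - z ^ 2) * (Real.sqrt (1 - z ^ 2) + 1)))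
        (𝓝[Set.Ioo (0:ℝ) 1] 0) (𝓝 0) := by
      have hnum : Tendsto (fun z : ℝ => 2 * z ^ 2 * Real.log z)
          (𝓝[Set.Ioo (0:ℝ) 1] 0) (𝓝 0) := by
        have h0 : Tendsto (fun x : ℝ => Real.log x * x ^ (2:ℝ)) (𝓝[>] (0:ℝ)) (𝓝 0) :=
          tendsto_log_mul_rpow_nhdsGT_zero two_pos
        have h1 : Tendsto (fun x : ℝ => Real.log x * x ^ (2:ℝ))
            (𝓝[Set.Ioo (0:ℝ) 1] 0) (𝓝 0) :=
          h0.mono_left (nhdsWithin_mono 0 Set.Ioo_subset_Ioi_self)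
        have h2 := (h1.const_mul (2:ℝ))
        rw [mul_zero] at h2
        apply h2.congr'
        filter_upwards [self_mem_nhdsWithin] with z hz
        rw [show (2:ℝ) = ((2:ℕ):ℝ) by norm_num, Real.rpow_natCast]
        ring
      have hden : Tendsto (fun z : ℝ => Real.sqrt (1 - z ^ 2) * (Real.sqrt (1 - z ^ 2) + 1))
          (𝓝[Set.Ioo (0:ℝ) 1] 0) (𝓝 2) := by
        have h2 : (1:ℝ) * (1 + 1) = 2 := by norm_num
        rw [← h2]
        exact hφ.mul (hφ.add (tendsto_const_nhds (x := (1:ℝ))))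
      have := hnum.div hden (by norm_num)
      simpa [Pi.div_def] using this
    have := term1.sub term2
    rw [sub_zero] at this
    apply this.congr'
    filter_upwards [self_mem_nhdsWithin] with z hz
    exact (g_eq0 hz).symm
  · -- limit at 1
    have hφ : Tendsto (fun z : ℝ => Real.sqrt (1 - z ^ 2))
        (𝓝[Set.Ioo (0:ℝ) 1] 1) (𝓝[Set.Ioo (0:ℝ) 1] 0) := by
      apply tendsto_nhdsWithin_of_tendsto_nhds_of_eventually_within
      · have hc : Continuous fun z : ℝ => Real.sqrt (1 - z ^ 2) := by fun_prop
        have := (hc.tendsto 1).mono_left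
          (nhdsWithin_le_nhds : 𝓝[Set.Ioo (0:ℝ) 1] (1:ℝ) ≤ 𝓝 1)
        simpa using this
      · exact eventually_nhdsWithin_of_forall (fun z hz => sqrt_mem hz)
    have hh : Tendsto hAux (𝓝[Set.Ioo (0:ℝ) 1] 0) (𝓝 2) := by
      have part1 : Tendsto (fun s : ℝ => Real.log (1 - s ^ 2))
          (𝓝[Set.Ioo (0:ℝ) 1] 0) (𝓝 0) := by
        have hc : ContinuousAt (fun s : ℝ => Real.log (1 - s ^ 2)) 0 := by
          apply ContinuousAt.log (by fun_prop)
          norm_num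
        have := hc.tendsto.mono_left
          (nhdsWithin_le_nhds : 𝓝[Set.Ioo (0:ℝ) 1] (0:ℝ) ≤ 𝓝 0)
        simpa using this
      have part2 : Tendsto (fun s : ℝ =>
          (1 / s) * (Real.log (1 + s) - Real.log (1 - s)))
          (𝓝[Set.Ioo (0:ℝ) 1] 0) (𝓝 2) := by
        set F : ℝ → ℝ := fun s => Real.log (1 + s) - Real.log (1 - s) with hF
        have hd : HasDerivAt F 2 0 := by
          have e1 : HasDerivAt (fun y : ℝ => Real.log (1 + y)) (1/(1+(0:ℝ))) 0 := by
            simpa using (((hasDerivAt_id (0:ℝ)).const_add 1).log (by norm_num))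
          have e2 : HasDerivAt (fun y : ℝ => Real.log (1 - y)) ((-1)/(1-(0:ℝ))) 0 := by
            simpa using (((hasDerivAt_id (0:ℝ)).const_sub 1).log (by norm_num))
          have := e1.sub e2
          norm_num at this
          exact this
        have hslope := hasDerivAt_iff_tendsto_slope.mp hd
        have hmono : 𝓝[Set.Ioo (0:ℝ) 1] (0:ℝ) ≤ 𝓝[{(0:ℝ)}ᶜ] 0 := by
          apply nhdsWithin_mono
          intro x hx
          exact ne_of_gt hx.1
        have := hslope.mono_left hmono
        apply this.congr'
        filter_upwards [self_mem_nhdsWithin] with s hs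
        have hF0 : F 0 = 0 := by simp [hF]
        rw [slope_def_field, hF0, sub_zero, sub_zero, one_div, inv_mul_eq_div]
      have := part1.add part2
      rw [zero_add] at this
      exact this
    have := hh.comp hφ
    apply this.congr'
    filter_upwards [self_mem_nhdsWithin] with z hz
    exact (g_eq hz).symm
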